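/- Let P₁, P₂, τ₁, τ₂ > 0 satisfy τ₁·γ(P₂) ≤ τ₂·(γ(P₁+P₂) − γ(P₂)) (Case III), write a = γ(P₁), b = γ(P₂), s = γ(P₁+P₂), and let R = {(d₁, d₂) ∈ ℝ² : a·d₁ ≥ τ₁, b·d₂ ≥ τ₂, (s−b)·d₁ + b·d₂ ≥ τ₁ + τ₂}. Set w₁ = (s−b)/s, Ā = (τ₁/(s−b), τ₂/b) and B̄ = (τ₁/a, τ₂/b + (a+b−s)·τ₁/(a·b)). Then Ā ∈ R and B̄ ∈ R, and for every w ∈ [0,1] and every (d₁, d₂) ∈ R: if w ∈ [0, w₁] then w·Ā₁ + (1−w)·Ā₂ ≤ w·d₁ + (1−w)·d₂, and if w ∈ [w₁, 1] then w·B̄₁ + (1−w)·B̄₂ ≤ w·d₁ + (1−w)·d₂. -/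

import Mathlib

/-- γ(x) = (1/2)·log₂(1+x). -/
noncomputable def gam (x : ℝ) : ℝ := (1/2) * Real.logb 2 (1 + x)

theorem gam_pos {x : ℝ} (hx : 0 < x) : 0 < gam x := by
  have : 0 < Real.logb 2 (1 + x) := Real.logb_pos one_lt_two (by linarith)
  unfold gam
  positivity

theorem gam_lt_gam {x y : ℝ} (hx : -1 < x) (hxy : x < y) : gam x < gam y := by
  have : Real.logb 2 (1 + x) < Real.logb 2 (1 + y) :=
    Real.logb_lt_logb one_lt_two (by linarith) (by linarith)
  unfold gam
  linarith

theorem gam_add_le {x y : ℝ} (hx : 0 ≤ x) (hy : 0 ≤ y) : gam (x + y) ≤ gam x + gam y := by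
  have hmul : Real.logb 2 (1 + (x + y)) ≤ Real.logb 2 ((1 + x) * (1 + y)) :=
    Real.logb_le_logb_of_le one_lt_two (by linarith) (by nlinarith)
  rw [Real.logb_mul (by positivity) (by positivity)] at hmul
  unfold gam
  linarith

def completionRegion (a b s τ₁ τ₂ : ℝ) : Set (ℝ × ℝ) :=
  {d : ℝ × ℝ | a * d.1 ≥ τ₁ ∧ b * d.2 ≥ τ₂ ∧ (s - b) * d.1 + b * d.2 ≥ τ₁ + τ₂}

section completionRegion

variable {a b s τ₁ τ₂ : ℝ}

theorem vertexA_mem_completionRegion (hτ₁ : 0 ≤ τ₁) (hb : 0 < b) (hbs : b < s)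
    (hsab : s ≤ a + b) : (τ₁ / (s - b), τ₂ / b) ∈ completionRegion a b s τ₁ τ₂ := by
  have hsb : 0 < s - b := sub_pos.mpr hbs
  refine ⟨?_, ?_, ?_⟩
  · calc a * (τ₁ / (s - b)) ≥ (s - b) * (τ₁ / (s - b)) :=
          mul_le_mul_of_nonneg_right (by linarith) (by positivity)
      _ = τ₁ := mul_div_cancel₀ τ₁ hsb.ne'
  · exact (mul_div_cancel₀ τ₂ hb.ne').ge
  · simp only [mul_div_cancel₀ _ hsb.ne', mul_div_cancel₀ _ hb.ne', ge_iff_le, le_refl]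

theorem vertexB_mem_completionRegion (hτ₁ : 0 ≤ τ₁) (ha : 0 < a) (hb : 0 < b)
    (hsab : s ≤ a + b) :
    (τ₁ / a, τ₂ / b + (a + b - s) * τ₁ / (a * b)) ∈ completionRegion a b s τ₁ τ₂ := by
  have hshift : 0 ≤ (a + b - s) * τ₁ / (a * b) :=
    div_nonneg (mul_nonneg (by linarith) hτ₁) (by positivity)
  refine ⟨(mul_div_cancel₀ τ₁ ha.ne').ge, ?_, ?_⟩
  · rw [mul_add, mul_div_cancel₀ τ₂ hb.ne']
    nlinarith
  · apply le_of_eq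
    field_simp
    ring

/- On `[0, (s - b) / s]` the objective minus its value at `Ā` is
`w * b * (sum-constraint slack) + (s - b - w * s) * (second-constraint slack)`,
a nonnegative combination. -/
theorem weighted_vertexA_le (hb : 0 < b) (hbs : b < s) {w : ℝ}
    (hw : w ∈ Set.Icc (0 : ℝ) ((s - b) / s)) {d : ℝ × ℝ} (hd : d ∈ completionRegion a b s τ₁ τ₂) :
    w * (τ₁ / (s - b)) + (1 - w) * (τ₂ / b) ≤ w * d.1 + (1 - w) * d.2 := by
  obtain ⟨-, hd₂, hsum⟩ := hd
  have hsb : 0 < s - b := sub_pos.mpr hbs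
  have hws : w * s ≤ s - b := (le_div_iff₀ (by linarith)).mp hw.2
  have hobj : w * (τ₁ / (s - b)) + (1 - w) * (τ₂ / b) =
      (w * b * τ₁ + (1 - w) * (s - b) * τ₂) / (b * (s - b)) := by
    field_simp
  rw [hobj, div_le_iff₀ (by positivity)]
  nlinarith [mul_nonneg (mul_nonneg hw.1 hb.le) (sub_nonneg.mpr hsum),
    mul_nonneg (sub_nonneg.mpr hws) (sub_nonneg.mpr hd₂)]

/- On `[(s - b) / s, 1]` the objective minus its value at `B̄` is
`a * (1 - w) * (sum-constraint slack) + (w * s - (s - b)) * (first-constraint slack)`. -/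
theorem weighted_vertexB_le (ha : 0 < a) (hb : 0 < b) (hs : 0 < s) {w : ℝ}
    (hw : w ∈ Set.Icc ((s - b) / s) 1) {d : ℝ × ℝ} (hd : d ∈ completionRegion a b s τ₁ τ₂) :
    w * (τ₁ / a) + (1 - w) * (τ₂ / b + (a + b - s) * τ₁ / (a * b)) ≤
      w * d.1 + (1 - w) * d.2 := by
  obtain ⟨hd₁, -, hsum⟩ := hd
  have hws : s - b ≤ w * s := (div_le_iff₀ hs).mp hw.1
  have hobj : w * (τ₁ / a) + (1 - w) * (τ₂ / b + (a + b - s) * τ₁ / (a * b)) =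
      (w * b * τ₁ + (1 - w) * (a * τ₂ + (a + b - s) * τ₁)) / (a * b) := by
    field_simp
  rw [hobj, div_le_iff₀ (by positivity)]
  nlinarith [mul_nonneg (mul_nonneg ha.le (sub_nonneg.mpr hw.2)) (sub_nonneg.mpr hsum),
    mul_nonneg (sub_nonneg.mpr hws) (sub_nonneg.mpr hd₁)]

end completionRegion

theorem stmt_16_general (P₁ P₂ τ₁ τ₂ a b s : ℝ) (hP₁ : 0 < P₁) (hP₂ : 0 < P₂)
    (hτ₁ : 0 < τ₁)
    (ha : a = gam P₁) (hb : b = gam P₂) (hs : s = gam (P₁ + P₂))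
    (R : Set (ℝ × ℝ))
    (hR : R = {d : ℝ × ℝ | a * d.1 ≥ τ₁ ∧ b * d.2 ≥ τ₂ ∧
        (s - b) * d.1 + b * d.2 ≥ τ₁ + τ₂}) :
    (τ₁ / (s - b), τ₂ / b) ∈ R ∧
    (τ₁ / a, τ₂ / b + (a + b - s) * τ₁ / (a * b)) ∈ R ∧
    ∀ w : ℝ, w ∈ Set.Icc (0:ℝ) 1 → ∀ d : ℝ × ℝ, d ∈ R →
      (w ∈ Set.Icc (0:ℝ) ((s - b) / s) →
        w * (τ₁ / (s - b)) + (1 - w) * (τ₂ / b) ≤ w * d.1 + (1 - w) * d.2) ∧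
      (w ∈ Set.Icc ((s - b) / s) 1 →
        w * (τ₁ / a) + (1 - w) * (τ₂ / b + (a + b - s) * τ₁ / (a * b)) ≤
          w * d.1 + (1 - w) * d.2) := by
  have ha₀ : 0 < a := ha ▸ gam_pos hP₁
  have hb₀ : 0 < b := hb ▸ gam_pos hP₂
  have hbs : b < s := hb ▸ hs ▸ gam_lt_gam (by linarith) (lt_add_of_pos_left P₂ hP₁)
  have hsab : s ≤ a + b := ha ▸ hb ▸ hs ▸ gam_add_le hP₁.le hP₂.le
  have hR' : R = completionRegion a b s τ₁ τ₂ := hR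
  subst hR'
  exact ⟨vertexA_mem_completionRegion hτ₁.le hb₀ hbs hsab,
    vertexB_mem_completionRegion hτ₁.le ha₀ hb₀ hsab,
    fun w _ d hd => ⟨fun hw => weighted_vertexA_le hb₀ hbs hw hd,
      fun hw => weighted_vertexB_le ha₀ hb₀ (by linarith) hw hd⟩⟩

theorem stmt_16 (P₁ P₂ τ₁ τ₂ a b s : ℝ) (hP₁ : 0 < P₁) (hP₂ : 0 < P₂)
    (hτ₁ : 0 < τ₁) (hτ₂ : 0 < τ₂)
    (ha : a = gam P₁) (hb : b = gam P₂) (hs : s = gam (P₁ + P₂))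
    (hcase : τ₁ * b ≤ τ₂ * (s - b))
    (R : Set (ℝ × ℝ))
    (hR : R = {d : ℝ × ℝ | a * d.1 ≥ τ₁ ∧ b * d.2 ≥ τ₂ ∧
        (s - b) * d.1 + b * d.2 ≥ τ₁ + τ₂}) :
    (τ₁ / (s - b), τ₂ / b) ∈ R ∧
    (τ₁ / a, τ₂ / b + (a + b - s) * τ₁ / (a * b)) ∈ R ∧
    ∀ w : ℝ, w ∈ Set.Icc (0:ℝ) 1 → ∀ d : ℝ × ℝ, d ∈ R →
      (w ∈ Set.Icc (0:ℝ) ((s - b) / s) →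
        w * (τ₁ / (s - b)) + (1 - w) * (τ₂ / b) ≤ w * d.1 + (1 - w) * d.2) ∧
      (w ∈ Set.Icc ((s - b) / s) 1 →
        w * (τ₁ / a) + (1 - w) * (τ₂ / b + (a + b - s) * τ₁ / (a * b)) ≤
          w * d.1 + (1 - w) * d.2) :=
  stmt_16_general P₁ P₂ τ₁ τ₂ a b s hP₁ hP₂ hτ₁ ha hb hs R hR
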